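/- For T > 0 define w(t) = 2 sinh((π − 1/T)t)/sinh(2πt) for t > 0. Then w(t) > 0 for all t > 0, and for T < t ≤ 2T one has w(t) ≍ exp(−πt/T)/cosh(πt), with absolute implied constants. -/
import Mathlib


/-- The spectral weight `w(t) = 2 sinh((π - 1/T)t)/sinh(2πt)`. -/
noncomputable def wT (T t : ℝ) : ℝ :=
  2 * Real.sinh ((Real.pi - 1 / T) * t) / Real.sinh (2 * Real.pi * t)

lemma aux_exp2 : (4:ℝ) < Real.exp 2 := by
  have h := Real.exp_one_gt_d9
  have h2 : Real.exp 2 = Real.exp 1 * Real.exp 1 := by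
    rw [← Real.exp_add]; norm_num
  nlinarith [Real.exp_pos 1]

lemma aux_exp5 : Real.exp 5 < 225 := by
  have h := Real.exp_one_lt_d9
  have h2 : Real.exp 5 = Real.exp 1 ^ 5 := by
    rw [← Real.exp_nat_mul]; norm_num
  have hp : (0:ℝ) < Real.exp 1 := Real.exp_pos 1
  rw [h2]
  nlinarith [pow_lt_pow_left₀ h (le_of_lt hp) (by norm_num : (5:ℕ) ≠ 0)]

lemma aux_lower (a b b' : ℝ) (h1 : 1 ≤ a - b) (h2 : b + 2 ≤ b') :
    (1/2) * Real.exp (-b') * Real.sinh a ≤ Real.sinh (a - b) := by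
  rw [Real.sinh_eq, Real.sinh_eq]
  have hX : 2 ≤ Real.exp (a - b) := by
    calc (2:ℝ) ≤ 1 + 1 := by norm_num
    _ ≤ Real.exp 1 := by have := Real.add_one_le_exp (1:ℝ); linarith
    _ ≤ Real.exp (a - b) := Real.exp_le_exp.mpr h1
  have hinv : Real.exp (-(a-b)) * Real.exp (a-b) = 1 := by
    rw [← Real.exp_add]; simp
  have e1 : Real.exp (-b') * Real.exp a ≤ (1/4) * Real.exp (a-b) := by
    have key : Real.exp (-b') * Real.exp a = Real.exp (a - b) * Real.exp (b - b') := by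
      rw [← Real.exp_add, ← Real.exp_add]; ring_nf
    rw [key]
    have h4 : Real.exp (b - b') ≤ 1/4 := by
      have hle : Real.exp (b - b') ≤ Real.exp (-2) := Real.exp_le_exp.mpr (by linarith)
      have h2' : Real.exp (-2) ≤ 1/4 := by
        rw [Real.exp_neg]
        rw [inv_le_iff_one_le_mul₀ (Real.exp_pos 2)]
        nlinarith [aux_exp2]
      linarith
    nlinarith [Real.exp_pos (a-b), Real.exp_pos (b - b')]
  have hp1 := Real.exp_pos (-(a-b))
  have hp2 := Real.exp_pos (-a)
  have hp3 := Real.exp_pos (-b')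
  nlinarith [mul_pos hp3 hp2, hinv, hX, e1]

lemma aux_upper (a b b' : ℝ) (ha : 1 ≤ a) (h1 : 0 ≤ a - b) (h2 : b' ≤ b + 5) :
    Real.sinh (a - b) ≤ 300 * Real.exp (-b') * Real.sinh a := by
  rw [Real.sinh_eq, Real.sinh_eq]
  have hA : 2 ≤ Real.exp a := by
    calc (2:ℝ) ≤ 1 + 1 := by norm_num
    _ ≤ Real.exp 1 := by have := Real.add_one_le_exp (1:ℝ); linarith
    _ ≤ Real.exp a := Real.exp_le_exp.mpr ha
  have hinvA : Real.exp (-a) * Real.exp a = 1 := by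
    rw [← Real.exp_add]; simp
  have e1 : Real.exp (-5) * Real.exp (a - b) ≤ Real.exp (-b') * Real.exp a := by
    rw [← Real.exp_add, ← Real.exp_add]
    exact Real.exp_le_exp.mpr (by linarith)
  have e5 : (1:ℝ)/225 ≤ Real.exp (-5) := by
    rw [Real.exp_neg, le_inv_comm₀ (by norm_num) (Real.exp_pos 5)]
    have := aux_exp5
    nlinarith [Real.exp_pos 5]
  have hp1 := Real.exp_pos (-(a-b))
  have hp2 := Real.exp_pos (-a)
  have hp3 := Real.exp_pos (-b')
  have hpX := Real.exp_pos (a-b)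
  nlinarith [hinvA, hA, e1, e5, mul_le_mul_of_nonneg_right e5 hpX.le,
    mul_pos hp3 hp2]

/-- `w(t) > 0` for `t > 0`, and `w(t) ≍ exp(-πt/T)/cosh(πt)` for `T < t ≤ 2T`,
with absolute implied constants, uniformly for `T ≥ 1`. -/
theorem wT_positive_and_asymptotic :
    ∃ c₁ c₂ : ℝ, 0 < c₁ ∧ 0 < c₂ ∧ ∀ T : ℝ, 1 ≤ T →
      (∀ t : ℝ, 0 < t → 0 < wT T t) ∧
      ∀ t : ℝ, T < t → t ≤ 2 * T →
        c₁ * (Real.exp (-(Real.pi * t / T)) / Real.cosh (Real.pi * t)) ≤ wT T t ∧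
        wT T t ≤ c₂ * (Real.exp (-(Real.pi * t / T)) / Real.cosh (Real.pi * t)) := by
  refine ⟨1/2, 300, by norm_num, by norm_num, fun T hT => ?_⟩
  have hT0 : (0:ℝ) < T := by linarith
  have hpi := Real.pi_gt_three
  have hpi2 := Real.pi_lt_d2
  have hcoef : 0 < Real.pi - 1/T := by
    have : 1/T ≤ 1 := by rw [div_le_one hT0]; exact hT
    linarith
  constructor
  · intro t ht
    unfold wT
    apply div_pos
    · have := Real.sinh_pos_iff.mpr (mul_pos hcoef ht)
      linarith
    · exact Real.sinh_pos_iff.mpr (by positivity)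
  · intro t ht1 ht2
    have ht0 : 0 < t := lt_trans hT0 ht1
    have ht1' : 1 ≤ t := le_trans hT ht1.le
    set a := Real.pi * t with ha_def
    set b := t / T with hb_def
    set b' := Real.pi * t / T with hb'_def
    have hA : 0 < Real.sinh a := Real.sinh_pos_iff.mpr (by positivity)
    have hC : 0 < Real.cosh a := (Real.cosh_pos a)
    have hE : 0 < Real.exp (-b') := Real.exp_pos _
    have hr1 : 1 < t / T := (one_lt_div hT0).mpr ht1
    have hr2 : t / T ≤ 2 := by rw [div_le_iff₀ hT0]; linarith
    have hbr : b' = Real.pi * (t / T) := by rw [hb'_def, mul_div_assoc]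
    have hwT : wT T t = Real.sinh (a - b) / (Real.sinh a * Real.cosh a) := by
      unfold wT
      rw [show 2 * Real.pi * t = 2 * (Real.pi * t) by ring, Real.sinh_two_mul,
        show (Real.pi - 1/T) * t = a - b by rw [ha_def, hb_def]; ring]
      rw [show 2 * Real.sinh a * Real.cosh a = 2 * (Real.sinh a * Real.cosh a) by ring]
      rw [mul_div_mul_left _ _ (two_ne_zero)]
    -- key hypotheses for aux lemmas
    have hab1 : 1 ≤ a - b := by
      have hbt : b ≤ t := by rw [hb_def]; exact div_le_self ht0.le hT
      have : 3 * t ≤ a := by rw [ha_def]; nlinarith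
      linarith
    have ha1 : 1 ≤ a := by rw [ha_def]; nlinarith
    have h2l : b + 2 ≤ b' := by
      rw [hbr, hb_def]; nlinarith
    have h2u : b' ≤ b + 5 := by
      rw [hbr, hb_def]; nlinarith
    rw [hwT]
    constructor
    · have heq : (1/2 : ℝ) * (Real.exp (-b') / Real.cosh a)
          = (1/2 * Real.exp (-b') * Real.sinh a) / (Real.sinh a * Real.cosh a) := by
        field_simp
      rw [heq]
      gcongr
      exact aux_lower a b b' hab1 h2l
    · have heq : (300 : ℝ) * (Real.exp (-b') / Real.cosh a)
          = (300 * Real.exp (-b') * Real.sinh a) / (Real.sinh a * Real.cosh a) := by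
        field_simp
      rw [heq]
      gcongr
      exact aux_upper a b b' ha1 (by linarith) h2u
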